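/- Let ν ∈ (0,1], λ > 0, and E_ν = E_{ν,1}. Define the fractional linear birth probabilities p̂_k^ν(t) = ∑_{j=1}^k C(k-1, j-1)(-1)^{j-1} E_ν(-λ j t^ν) for k ≥ 1. Then for any n₀ ≥ 1 and t > 0, 1 - ∑_{k=1}^{n₀} p̂_k^ν(t) = ∑_{l=0}^{n₀} C(n₀, l)(-1)^l E_ν(-λ l t^ν). -/

import Mathlib

/-!
Exchanging the order of summation in `∑_{k ≤ n₀} p̂_k` and applying the hockey-stick identity
`∑_{k=j}^{n₀} C(k-1, j-1) = C(n₀, j)` gives `∑_{j=1}^{n₀} C(n₀, j) (-1)^{j-1} E_ν(-λ j t^ν)`.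
Since `E_ν(0) = 1`, subtracting this from `1` is the binomial sum with its `l = 0` term restored.
-/

open Finset

theorem Nat.sum_Icc_choose_pred (j n : ℕ) (hj : 1 ≤ j) :
    ∑ k ∈ Icc j n, (k - 1).choose (j - 1) = n.choose j := by
  obtain ⟨i, rfl⟩ : ∃ i, j = i + 1 := ⟨j - 1, by omega⟩
  rcases n with _ | m
  · simp
  rw [← map_add_right_Icc i m 1, sum_map]
  simpa using Nat.sum_Icc_choose m i

section BinomialSums

variable {R : Type*} [CommRing R]

theorem sum_Icc_sum_Icc_choose_pred_mul (n : ℕ) (g : ℕ → R) :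
    ∑ k ∈ Icc 1 n, ∑ j ∈ Icc 1 k, ((k - 1).choose (j - 1) : R) * (-1) ^ (j - 1) * g j =
      ∑ j ∈ Icc 1 n, (n.choose j : R) * (-1) ^ (j - 1) * g j := by
  rw [sum_comm' (t' := Icc 1 n) (s' := fun j => Icc j n)
    (by intro k j; simp only [mem_Icc]; omega)]
  refine sum_congr rfl fun j hj => ?_
  rw [← sum_mul, ← sum_mul, ← Nat.cast_sum, Nat.sum_Icc_choose_pred j n (mem_Icc.1 hj).1]

theorem one_sub_sum_Icc_sum_Icc_choose_pred_mul (n : ℕ) (g : ℕ → R) (hg : g 0 = 1) :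
    1 - ∑ k ∈ Icc 1 n, ∑ j ∈ Icc 1 k, ((k - 1).choose (j - 1) : R) * (-1) ^ (j - 1) * g j =
      ∑ l ∈ range (n + 1), (n.choose l : R) * (-1) ^ l * g l := by
  have hsign : ∀ l ∈ Icc 1 n,
      (n.choose l : R) * (-1) ^ l * g l = -((n.choose l : R) * (-1) ^ (l - 1) * g l) := by
    intro l hl
    obtain ⟨i, rfl⟩ : ∃ i, l = i + 1 := ⟨l - 1, by have := (mem_Icc.1 hl).1; omega⟩
    rw [Nat.add_sub_cancel, pow_succ]
    ring
  rw [range_eq_Ico, sum_eq_sum_Ico_succ_bot (by omega : 0 < n + 1), zero_add, Ico_add_one_right_eq_Icc,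
    sum_congr rfl hsign, sum_neg_distrib, sum_Icc_sum_Icc_choose_pred_mul, hg]
  simp only [Nat.choose_zero_right, Nat.cast_one, pow_zero, mul_one]
  ring

end BinomialSums

theorem tsum_zero_pow_div_gamma (ν : ℝ) : ∑' h : ℕ, (0 : ℝ) ^ h / Real.Gamma (ν * h + 1) = 1 := by
  rw [tsum_eq_single 0 fun h hh => by simp [zero_pow hh]]
  simp

theorem stmt_19_general (ν : ℝ) (lam : ℝ)
    (E : ℝ → ℝ) (hE : ∀ x, E x = ∑' h : ℕ, x ^ h / Real.Gamma (ν * h + 1))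
    (n₀ : ℕ) (t : ℝ) :
    1 - ∑ k ∈ Finset.Icc 1 n₀, ∑ j ∈ Finset.Icc 1 k,
        ((k - 1).choose (j - 1) : ℝ) * (-1) ^ (j - 1) * E (-(lam * j * t ^ ν)) =
      ∑ l ∈ Finset.range (n₀ + 1), (n₀.choose l : ℝ) * (-1) ^ l * E (-(lam * l * t ^ ν)) := by
  refine one_sub_sum_Icc_sum_Icc_choose_pred_mul n₀ (fun j : ℕ => E (-(lam * j * t ^ ν))) ?_
  simp only [Nat.cast_zero, mul_zero, zero_mul, neg_zero, hE, tsum_zero_pow_div_gamma]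

theorem stmt_19 (ν : ℝ) (hν : ν ∈ Set.Ioc (0 : ℝ) 1) (lam : ℝ) (hlam : 0 < lam)
    (E : ℝ → ℝ) (hE : ∀ x, E x = ∑' h : ℕ, x ^ h / Real.Gamma (ν * h + 1))
    (n₀ : ℕ) (hn : 1 ≤ n₀) (t : ℝ) (ht : 0 < t) :
    1 - ∑ k ∈ Finset.Icc 1 n₀, ∑ j ∈ Finset.Icc 1 k,
        ((k - 1).choose (j - 1) : ℝ) * (-1) ^ (j - 1) * E (-(lam * j * t ^ ν)) =
      ∑ l ∈ Finset.range (n₀ + 1), (n₀.choose l : ℝ) * (-1) ^ l * E (-(lam * l * t ^ ν)) :=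
  stmt_19_general ν lam E hE n₀ t
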